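/- Let Ω ⊂ ℂ be open and let φ : Ω → 𝔻 be a C¹-diffeomorphism onto the open unit disc 𝔻 with J(z,φ) = 1 for all z ∈ Ω. Set μ(z) := φ_z̄(z)/φ_z(z), suppose |μ(z)| ≤ k for all z ∈ Ω for some k ∈ [0,1), and put K = (1+k)/(1−k). Let A(z) be the matrix with entries a₁₁ = |1−μ|²/(1−|μ|²), a₁₂ = a₂₁ = −2·Im μ/(1−|μ|²), a₂₂ = |1+μ|²/(1−|μ|²). Then the infimum over nonzero C¹ real-valued f with compact support in Ω of the Rayleigh quotient ∬_Ω ⟨A∇f, ∇f⟩ dx dy / ∬_Ω |f|² dx dy is at most K times the infimum over nonzero C¹ real-valued g with compact support in 𝔻 of ∬_𝔻 |∇g|² du dv / ∬_𝔻 |g|² du dv. -/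

import Mathlib

open MeasureTheory Real
set_option maxHeartbeats 1000000

/-- Wirtinger derivative `φ_z = ½(Dφ(z)(1) − i·Dφ(z)(i))`. -/
noncomputable def wirtingerZ (φ : ℂ → ℂ) (z : ℂ) : ℂ :=
  (fderiv ℝ φ z 1 - Complex.I * fderiv ℝ φ z Complex.I) / 2

/-- Wirtinger derivative `φ_z̄ = ½(Dφ(z)(1) + i·Dφ(z)(i))`. -/
noncomputable def wirtingerZbar (φ : ℂ → ℂ) (z : ℂ) : ℂ :=
  (fderiv ℝ φ z 1 + Complex.I * fderiv ℝ φ z Complex.I) / 2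

/-- Jacobian `J(z,φ) = |φ_z|² − |φ_z̄|²`. -/
noncomputable def jacobian (φ : ℂ → ℂ) (z : ℂ) : ℝ :=
  ‖wirtingerZ φ z‖ ^ 2 - ‖wirtingerZbar φ z‖ ^ 2

/-- The matrix `A(μ)` induced by a Beltrami coefficient `μ`. -/
noncomputable def matrixOfMu (μ : ℂ) : Matrix (Fin 2) (Fin 2) ℝ :=
  !![‖1 - μ‖ ^ 2 / (1 - ‖μ‖ ^ 2),
       -2 * μ.im / (1 - ‖μ‖ ^ 2);
     -2 * μ.im / (1 - ‖μ‖ ^ 2),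
       ‖1 + μ‖ ^ 2 / (1 - ‖μ‖ ^ 2)]

/-- The quadratic form `⟨A v, v⟩` on `ℝ²`. -/
noncomputable def quadForm (A : Matrix (Fin 2) (Fin 2) ℝ) (v : Fin 2 → ℝ) : ℝ :=
  dotProduct (A.mulVec v) v

/-- The gradient of `f : ℂ → ℝ` at `z` as a vector in `ℝ²`. -/
noncomputable def gradVec (f : ℂ → ℝ) (z : ℂ) : Fin 2 → ℝ :=
  ![fderiv ℝ f z 1, fderiv ℝ f z Complex.I]

/-- Squared Euclidean norm of the gradient of `f : ℂ → ℝ` at `z`. -/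
noncomputable def gradNormSq (f : ℂ → ℝ) (z : ℂ) : ℝ :=
  (fderiv ℝ f z 1) ^ 2 + (fderiv ℝ f z Complex.I) ^ 2

/- ### auxiliary lemmas -/

lemma clm_det (L : ℂ →L[ℝ] ℂ) :
    L.det = ‖(L 1 - Complex.I * L Complex.I)/2‖ ^ 2
      - ‖(L 1 + Complex.I * L Complex.I)/2‖ ^ 2 := by
  rw [ContinuousLinearMap.det, ← LinearMap.det_toMatrix Complex.basisOneI,
    Matrix.det_fin_two]
  simp only [LinearMap.toMatrix_apply, Complex.coe_basisOneI_repr, Complex.coe_basisOneI,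
    ContinuousLinearMap.coe_coe, Complex.sq_norm]
  simp [Complex.normSq_apply, Matrix.cons_val_zero, Matrix.cons_val_one]
  ring

lemma det_fderiv (φ : ℂ → ℂ) (z : ℂ) : (fderiv ℝ φ z).det = jacobian φ z := by
  rw [clm_det]; rfl

lemma quadForm_literal (a b c d x y : ℝ) :
    quadForm !![a, b; c, d] ![x, y] = a*x*x + b*y*x + c*x*y + d*y*y := by
  simp [quadForm, Matrix.mulVec, dotProduct, Fin.sum_univ_two]; ring

lemma key_poly (p1 p2 q1 q2 s t : ℝ) (h : p1^2 + p2^2 - (q1^2 + q2^2) = 1) :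
    ((p1-q1)^2+(p2-q2)^2) * ((p1+q1)*s + (p2+q2)*t)^2
      + 2 * (2*(p2*q1 - p1*q2)) * ((p1+q1)*s + (p2+q2)*t) * (-(p2-q2)*s + (p1-q1)*t)
      + ((p1+q1)^2+(p2+q2)^2) * (-(p2-q2)*s + (p1-q1)*t)^2 = s^2 + t^2 := by
  linear_combination (s^2+t^2) * (p1^2+p2^2-q1^2-q2^2+1) * h

lemma matrixOfMu_div (p q : ℂ) (hJ : Complex.normSq p - Complex.normSq q = 1) :
    matrixOfMu (q / p) =
      !![Complex.normSq (p - q), 2 * (p.im * q.re - p.re * q.im);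
         2 * (p.im * q.re - p.re * q.im), Complex.normSq (p + q)] := by
  have hp : Complex.normSq p ≠ 0 := by
    intro h; rw [h] at hJ; have := Complex.normSq_nonneg q; linarith
  have hp' : p ≠ 0 := fun h => hp (by simp [h])
  have hp2 : p.re^2 + p.im^2 ≠ 0 := by
    simpa [Complex.normSq_apply, sq] using hp
  have hden : 1 - ‖q / p‖ ^ 2 = 1 / Complex.normSq p := by
    rw [Complex.sq_norm, Complex.normSq_div]
    field_simp; linarith
  have h1 : (1 : ℂ) - q / p = (p - q) / p := by field_simp
  have h2 : (1 : ℂ) + q / p = (p + q) / p := by field_simp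
  have ha : ‖1 - q/p‖ ^ 2 / (1 - ‖q/p‖ ^ 2) = Complex.normSq (p - q) := by
    rw [hden, h1, Complex.sq_norm, Complex.normSq_div]; field_simp
  have hc : ‖1 + q/p‖ ^ 2 / (1 - ‖q/p‖ ^ 2) = Complex.normSq (p + q) := by
    rw [hden, h2, Complex.sq_norm, Complex.normSq_div]; field_simp
  have hb : -2 * (q/p).im / (1 - ‖q/p‖ ^ 2) = 2 * (p.im * q.re - p.re * q.im) := by
    rw [hden, div_div_eq_mul_div, div_one, Complex.div_im]
    field_simp [hp]
    ring
  unfold matrixOfMu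
  rw [ha, hb, hc]

lemma quad_identity (p q : ℂ) (s t : ℝ)
    (hJ : Complex.normSq p - Complex.normSq q = 1) :
    quadForm (matrixOfMu (q / p))
      ![(p + q).re * s + (p + q).im * t,
        (Complex.I * (p - q)).re * s + (Complex.I * (p - q)).im * t] = s ^ 2 + t ^ 2 := by
  rw [matrixOfMu_div p q hJ, quadForm_literal]
  simp only [Complex.normSq_apply, Complex.add_re, Complex.add_im, Complex.sub_re,
    Complex.sub_im, Complex.mul_re, Complex.mul_im, Complex.I_re, Complex.I_im]
  have := key_poly p.re p.im q.re q.im s t (by simp only [Complex.normSq_apply] at hJ; nlinarith)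
  linear_combination this

lemma quadForm_nonneg (μ : ℂ) (hμ : ‖μ‖ < 1) (x y : ℝ) :
    0 ≤ quadForm (matrixOfMu μ) ![x, y] := by
  have h1 : Complex.normSq μ < 1 := by
    rw [← Complex.sq_norm]; nlinarith [norm_nonneg μ]
  have he : (0:ℝ) < 1 - (μ.re * μ.re + μ.im * μ.im) := by
    simp only [Complex.normSq_apply] at h1; linarith
  set e := 1 - (μ.re * μ.re + μ.im * μ.im) with hedef
  have hr : μ.re < 1 := by nlinarith [sq_nonneg μ.im, sq_nonneg μ.re]
  have ha : (0:ℝ) < (1 - μ.re)*(1-μ.re)+μ.im*μ.im := by nlinarith [sq_nonneg μ.im]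
  have key : 0 ≤ (((1 - μ.re)*(1-μ.re)+μ.im*μ.im) * (x*x) - 4*μ.im*(x*y) + ((1+μ.re)*(1+μ.re)+μ.im*μ.im) * (y*y)) := by
    have identity : ((1 - μ.re)*(1-μ.re)+μ.im*μ.im) *
        (((1 - μ.re)*(1-μ.re)+μ.im*μ.im) * (x*x) - 4*μ.im*(x*y) + ((1+μ.re)*(1+μ.re)+μ.im*μ.im) * (y*y))
        = (((1 - μ.re)*(1-μ.re)+μ.im*μ.im)*x - 2*μ.im*y)^2 + ((1-(μ.re*μ.re+μ.im*μ.im))*y)^2 := by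
      ring
    nlinarith [identity, sq_nonneg ((((1 - μ.re)*(1-μ.re)+μ.im*μ.im))*x - 2*μ.im*y),
      sq_nonneg ((1-(μ.re*μ.re+μ.im*μ.im))*y), ha]
  unfold matrixOfMu
  rw [quadForm_literal]
  have goal_eq : ‖1 - μ‖ ^ 2 / (1 - ‖μ‖ ^ 2) * x * x +
      -2 * μ.im / (1 - ‖μ‖ ^ 2) * y * x + -2 * μ.im / (1 - ‖μ‖ ^ 2) * x * y +
      ‖1 + μ‖ ^ 2 / (1 - ‖μ‖ ^ 2) * y * y =
      (((1 - μ.re)*(1-μ.re)+μ.im*μ.im) * (x*x) - 4*μ.im*(x*y)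
        + ((1+μ.re)*(1+μ.re)+μ.im*μ.im) * (y*y)) / e := by
    rw [Complex.sq_norm, Complex.sq_norm, Complex.sq_norm]
    simp only [Complex.normSq_apply, Complex.sub_re, Complex.sub_im, Complex.add_re,
      Complex.add_im, Complex.one_re, Complex.one_im]
    have hne : 1 - (μ.re * μ.re + μ.im * μ.im) ≠ 0 := he.ne'
    rw [hedef]
    field_simp
    ring
  rw [goal_eq]
  exact div_nonneg key he.le

lemma clR_apply (u : ℂ →L[ℝ] ℝ) (a : ℂ) :
    u a = a.re * u 1 + a.im * u Complex.I := by
  have h : a = a.re • (1:ℂ) + a.im • Complex.I := by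
    simp [Complex.real_smul, Complex.ext_iff]
  calc u a = u (a.re • (1:ℂ) + a.im • Complex.I) := by rw [← h]
    _ = a.re * u 1 + a.im * u Complex.I := by
        rw [map_add, u.map_smul, u.map_smul]; rfl

lemma wz_add (φ : ℂ → ℂ) (z : ℂ) :
    wirtingerZ φ z + wirtingerZbar φ z = fderiv ℝ φ z 1 := by
  unfold wirtingerZ wirtingerZbar; ring

lemma wz_sub (φ : ℂ → ℂ) (z : ℂ) :
    Complex.I * (wirtingerZ φ z - wirtingerZbar φ z) = fderiv ℝ φ z Complex.I := by
  have h : wirtingerZ φ z - wirtingerZbar φ z = -(Complex.I * fderiv ℝ φ z Complex.I) := by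
    unfold wirtingerZ wirtingerZbar; ring
  rw [h, mul_neg, ← mul_assoc, Complex.I_mul_I, neg_mul, one_mul, neg_neg]

noncomputable def fdEquiv (L : ℂ →L[ℝ] ℂ) (h : L.det ≠ 0) : ℂ ≃L[ℝ] ℂ :=
  (LinearMap.equivOfDetNeZero (L : ℂ →ₗ[ℝ] ℂ) h).toContinuousLinearEquiv

lemma fdEquiv_coe (L : ℂ →L[ℝ] ℂ) (h : L.det ≠ 0) :
    (fdEquiv L h : ℂ →L[ℝ] ℂ) = L := by
  ext x
  simp [fdEquiv]

set_option maxHeartbeats 1000000 in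
/-- Upper eigenvalue estimate `λ₁(A,Ω) ≤ K·λ₁(𝔻)` in a volume-preserving
`A`-quasiconformal regular domain, where `K = (1+k)/(1−k)` is the quasiconformality
coefficient of `φ`. -/
theorem upper_eigenvalue_estimate (Ω : Set ℂ) (hΩ : IsOpen Ω)
    (φ : ℂ → ℂ) (hφ : ContDiffOn ℝ 1 φ Ω)
    (hbij : Set.BijOn φ Ω (Metric.ball (0 : ℂ) 1))
    (hJ : ∀ z ∈ Ω, jacobian φ z = 1)
    (k : ℝ) (hk0 : 0 ≤ k) (hk1 : k < 1)
    (hμ : ∀ z ∈ Ω, ‖wirtingerZbar φ z / wirtingerZ φ z‖ ≤ k) :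
    sInf {q : ℝ | ∃ f : ℂ → ℝ, ContDiff ℝ 1 f ∧ HasCompactSupport f ∧
        tsupport f ⊆ Ω ∧ f ≠ 0 ∧
        q = (∫ z in Ω,
            quadForm (matrixOfMu (wirtingerZbar φ z / wirtingerZ φ z)) (gradVec f z)) /
          ∫ z in Ω, f z ^ 2} ≤
      ((1 + k) / (1 - k)) *
        sInf {q : ℝ | ∃ g : ℂ → ℝ, ContDiff ℝ 1 g ∧ HasCompactSupport g ∧
          tsupport g ⊆ Metric.ball (0 : ℂ) 1 ∧ g ≠ 0 ∧
          q = (∫ w in Metric.ball (0 : ℂ) 1, gradNormSq g w) /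
            ∫ w in Metric.ball (0 : ℂ) 1, g w ^ 2} := by
  set B : Set ℂ := Metric.ball (0 : ℂ) 1 with hBdef
  set LS := {q : ℝ | ∃ f : ℂ → ℝ, ContDiff ℝ 1 f ∧ HasCompactSupport f ∧
        tsupport f ⊆ Ω ∧ f ≠ 0 ∧
        q = (∫ z in Ω,
            quadForm (matrixOfMu (wirtingerZbar φ z / wirtingerZ φ z)) (gradVec f z)) /
          ∫ z in Ω, f z ^ 2} with hLS
  set RS := {q : ℝ | ∃ g : ℂ → ℝ, ContDiff ℝ 1 g ∧ HasCompactSupport g ∧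
          tsupport g ⊆ B ∧ g ≠ 0 ∧
          q = (∫ w in B, gradNormSq g w) /
            ∫ w in B, g w ^ 2} with hRS
  -- basic differential facts
  have hdiff : ∀ z ∈ Ω, DifferentiableAt ℝ φ z := fun z hz =>
    (hφ.contDiffAt (hΩ.mem_nhds hz)).differentiableAt one_ne_zero
  have hdetJ : ∀ z ∈ Ω, (fderiv ℝ φ z).det = 1 := fun z hz => by
    rw [det_fderiv]; exact hJ z hz
  have hnormSqJ : ∀ z ∈ Ω, Complex.normSq (wirtingerZ φ z) - Complex.normSq (wirtingerZbar φ z) = 1 := by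
    intro z hz
    have := hJ z hz
    rw [jacobian, Complex.sq_norm, Complex.sq_norm] at this
    exact this
  -- the inverse map
  set ψ := Function.invFunOn φ Ω with hψdef
  have hinv : Set.InvOn ψ φ Ω B := hbij.invOn_invFunOn
  have hψmaps : Set.MapsTo ψ B Ω := hbij.surjOn.mapsTo_invFunOn
  have hψcont : ContinuousOn ψ B := by
    intro w hw
    have hz : ψ w ∈ Ω := hψmaps hw
    have hzw : φ (ψ w) = w := hinv.2 hw
    have hdet' : (fderiv ℝ φ (ψ w)).det ≠ 0 := by rw [hdetJ _ hz]; norm_num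
    have hs : HasStrictFDerivAt φ (fderiv ℝ φ (ψ w)) (ψ w) :=
      (hφ.contDiffAt (hΩ.mem_nhds hz)).hasStrictFDerivAt one_ne_zero
    have hs' : HasStrictFDerivAt φ ((fdEquiv _ hdet' : ℂ ≃L[ℝ] ℂ) : ℂ →L[ℝ] ℂ) (ψ w) := by
      rw [fdEquiv_coe]; exact hs
    have hinvz : hs'.localInverse φ _ _ (φ (ψ w)) = ψ w := hs'.localInverse_apply_image
    have hcontinv : ContinuousAt (hs'.localInverse φ _ _) w := by
      have h := hs'.localInverse_continuousAt
      rwa [hzw] at h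
    have hev1 : ∀ᶠ w' in nhds w, hs'.localInverse φ _ _ w' ∈ Ω := by
      apply hcontinv.eventually_mem
      apply hΩ.mem_nhds
      rw [hzw] at hinvz
      rw [hinvz]; exact hz
    have hev2 : ∀ᶠ w' in nhds w, φ (hs'.localInverse φ _ _ w') = w' := by
      have h := hs'.eventually_right_inverse
      rwa [hzw] at h
    have heq : ψ =ᶠ[nhdsWithin w B] hs'.localInverse φ _ _ := by
      filter_upwards [hev1.filter_mono nhdsWithin_le_nhds,
        hev2.filter_mono nhdsWithin_le_nhds, self_mem_nhdsWithin] with w' h1 h2 hw'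
      exact hbij.injOn (hψmaps hw') h1 (by rw [hinv.2 hw', h2])
    refine (hcontinv.continuousWithinAt).congr_of_eventuallyEq heq ?_
    rw [hzw] at hinvz
    exact hinvz.symm
  -- change of variables
  have hCoV : ∀ F : ℂ → ℝ, (∫ w in B, F w) = ∫ z in Ω, F (φ z) := by
    intro F
    have h := integral_image_eq_integral_abs_det_fderiv_smul volume hΩ.measurableSet
      (fun x hx => ((hdiff x hx).hasFDerivAt).hasFDerivWithinAt) hbij.injOn F
    rw [hbij.image_eq] at h
    rw [h]
    apply setIntegral_congr_fun hΩ.measurableSet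
    intro x hx
    show |(fderiv ℝ φ x).det| • F (φ x) = F (φ x)
    rw [hdetJ x hx]
    simp
  -- main construction
  have main : ∀ q ∈ RS, ∃ q' ∈ LS, q' = q := by
    classical
    rintro q ⟨g, hg, hgc, hgsupp, hgne, rfl⟩
    set T := tsupport g with hT
    set D := ψ '' T with hD
    have hDcomp : IsCompact D := (hgc.isCompact).image_of_continuousOn (hψcont.mono hgsupp)
    have hDΩ : D ⊆ Ω := by
      rintro _ ⟨w, hw, rfl⟩; exact hψmaps (hgsupp hw)
    set f : ℂ → ℝ := fun z => if z ∈ Ω then g (φ z) else 0 with hfdef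
    have hfeq : ∀ z ∈ Ω, f z = g (φ z) := by
      intro z hz
      simp only [hfdef]
      exact if_pos hz
    have hfsupp : Function.support f ⊆ D := by
      intro z hzne0
      have hzne : f z ≠ 0 := hzne0
      have hzΩ : z ∈ Ω := by
        by_contra h
        apply hzne
        simp only [hfdef]
        exact if_neg h
      have hgz : g (φ z) ≠ 0 := by rwa [hfeq z hzΩ] at hzne
      have : φ z ∈ T := subset_tsupport g hgz
      exact ⟨φ z, this, hinv.1 hzΩ⟩
    have htsub : tsupport f ⊆ D := closure_minimal hfsupp hDcomp.isClosed
    have hfc : HasCompactSupport f := hDcomp.of_isClosed_subset (isClosed_tsupport f) htsub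
    have hfΩ : tsupport f ⊆ Ω := htsub.trans hDΩ
    have hsmooth : ContDiff ℝ 1 f := by
      rw [contDiff_iff_contDiffAt]
      intro z
      by_cases hz : z ∈ Ω
      · have h1 : ContDiffAt ℝ 1 (g ∘ φ) z :=
          (hg.contDiffAt).comp z (hφ.contDiffAt (hΩ.mem_nhds hz))
        apply h1.congr_of_eventuallyEq
        filter_upwards [hΩ.mem_nhds hz] with x hx
        exact hfeq x hx
      · have hzD : z ∉ D := fun h => hz (hDΩ h)
        have : ∀ᶠ x in nhds z, f x = 0 := by
          filter_upwards [hDcomp.isClosed.isOpen_compl.mem_nhds hzD] with x hx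
          by_contra h
          exact hx (hfsupp h)
        exact contDiffAt_const.congr_of_eventuallyEq this
    have hfne : f ≠ 0 := by
      obtain ⟨w, hw⟩ := Function.ne_iff.mp hgne
      have hwT : w ∈ T := subset_tsupport g hw
      have hwB : w ∈ B := hgsupp hwT
      intro h
      have : f (ψ w) = 0 := by rw [h]; rfl
      rw [hfeq _ (hψmaps hwB), hinv.2 hwB] at this
      exact hw this
    -- the two integral identities
    have hden : (∫ z in Ω, f z ^ 2) = ∫ w in B, g w ^ 2 := by
      rw [hCoV (fun w => g w ^ 2)]
      apply setIntegral_congr_fun hΩ.measurableSet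
      intro z hz
      show f z ^ 2 = g (φ z) ^ 2
      rw [hfeq z hz]
    have hnum : (∫ z in Ω, quadForm (matrixOfMu (wirtingerZbar φ z / wirtingerZ φ z)) (gradVec f z))
        = ∫ w in B, gradNormSq g w := by
      rw [hCoV (gradNormSq g)]
      apply setIntegral_congr_fun hΩ.measurableSet
      intro z hz
      show quadForm (matrixOfMu (wirtingerZbar φ z / wirtingerZ φ z)) (gradVec f z)
        = gradNormSq g (φ z)
      -- pointwise identity
      have hfev : f =ᶠ[nhds z] (g ∘ φ) := by
        filter_upwards [hΩ.mem_nhds hz] with x hx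
        exact hfeq x hx
      have hfd : fderiv ℝ f z = (fderiv ℝ g (φ z)).comp (fderiv ℝ φ z) := by
        rw [hfev.fderiv_eq]
        exact fderiv_comp z (hg.differentiable one_ne_zero _) (hdiff z hz)
      set u := fderiv ℝ g (φ z) with hu
      have e1 : (u.comp (fderiv ℝ φ z)) 1 =
          (wirtingerZ φ z + wirtingerZbar φ z).re * u 1 +
          (wirtingerZ φ z + wirtingerZbar φ z).im * u Complex.I := by
        rw [ContinuousLinearMap.comp_apply, ← wz_add φ z]
        exact clR_apply u _
      have e2 : (u.comp (fderiv ℝ φ z)) Complex.I =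
          (Complex.I * (wirtingerZ φ z - wirtingerZbar φ z)).re * u 1 +
          (Complex.I * (wirtingerZ φ z - wirtingerZbar φ z)).im * u Complex.I := by
        rw [ContinuousLinearMap.comp_apply, ← wz_sub φ z]
        exact clR_apply u _
      have hgrad : gradVec f z =
          ![(wirtingerZ φ z + wirtingerZbar φ z).re * u 1 +
              (wirtingerZ φ z + wirtingerZbar φ z).im * u Complex.I,
            (Complex.I * (wirtingerZ φ z - wirtingerZbar φ z)).re * u 1 +
              (Complex.I * (wirtingerZ φ z - wirtingerZbar φ z)).im * u Complex.I] := by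
        unfold gradVec
        rw [hfd, e1, e2]
      rw [hgrad,
        quad_identity (wirtingerZ φ z) (wirtingerZbar φ z) (u 1) (u Complex.I) (hnormSqJ z hz)]
      rfl
    refine ⟨_, ⟨f, hsmooth, hfc, hfΩ, hfne, rfl⟩, ?_⟩
    rw [hnum, hden]
  -- lower bounds
  have hLS_lb : ∀ q ∈ LS, (0:ℝ) ≤ q := by
    rintro q ⟨f, hf, hfc, hfΩ, hfne, rfl⟩
    apply div_nonneg
    · apply setIntegral_nonneg hΩ.measurableSet
      intro z hz
      have habs : ‖wirtingerZbar φ z / wirtingerZ φ z‖ < 1 :=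
        lt_of_le_of_lt (hμ z hz) hk1
      exact quadForm_nonneg _ habs _ _
    · apply setIntegral_nonneg hΩ.measurableSet
      intro z _
      exact sq_nonneg _
  have hRS_lb : ∀ q ∈ RS, (0:ℝ) ≤ q := by
    rintro q ⟨g, hg, hgc, hgsupp, hgne, rfl⟩
    apply div_nonneg
    · apply setIntegral_nonneg (Metric.isOpen_ball.measurableSet)
      intro z _
      exact add_nonneg (sq_nonneg _) (sq_nonneg _)
    · apply setIntegral_nonneg (Metric.isOpen_ball.measurableSet)
      intro z _
      exact sq_nonneg _
  have hLS_bdd : BddBelow LS := ⟨0, fun q hq => hLS_lb q hq⟩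
  -- RS nonempty
  have hRS_ne : RS.Nonempty := by
    set hb : ContDiffBump (0:ℂ) := ⟨1/2, 3/4, by norm_num, by norm_num⟩ with hbdef
    have hrIn : hb.rIn = 1/2 := rfl
    have hrOut : hb.rOut = 3/4 := rfl
    refine ⟨_, ⟨(hb : ℂ → ℝ), hb.contDiff, hb.hasCompactSupport, ?_, ?_, rfl⟩⟩
    · rw [hb.tsupport_eq, hrOut]
      exact Metric.closedBall_subset_ball (by norm_num)
    · intro h
      have h0 : hb (0:ℂ) = 1 :=
        hb.one_of_mem_closedBall (Metric.mem_closedBall_self (by rw [hrIn]; norm_num))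
      rw [congrFun h 0] at h0
      norm_num at h0
  have h1 : sInf LS ≤ sInf RS := by
    apply le_csInf hRS_ne
    intro q hq
    obtain ⟨q', hq', rfl⟩ := main q hq
    exact csInf_le hLS_bdd hq'
  have h2 : (0:ℝ) ≤ sInf RS := le_csInf hRS_ne hRS_lb
  have hK1 : (1:ℝ) ≤ (1 + k) / (1 - k) := by
    rw [le_div_iff₀ (by linarith)]
    linarith
  calc sInf LS ≤ sInf RS := h1
    _ ≤ ((1 + k) / (1 - k)) * sInf RS := le_mul_of_one_le_left h2 hK1
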